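/- Let A, A', B, B', C ∈ ℂ^{r×r} with A, A', B pairwise commuting and B'C = CB', let s be a non-negative integer, and suppose C + nI is invertible for all integers n ≥ 0 and C − kI is invertible for all integers 1 ≤ k ≤ s; let |x| < 1, |y| < 1. Then F₃(A, A', B, B'; C−sI; x, y) = F₃(A, A', B, B'; C; x, y) + x·A·B·∑_{k=1}^{s} [F₃(A+I, A', B+I, B'; C+(2−k)I; x, y)]·(C−kI)⁻¹·(C−(k−1)I)⁻¹ + y·A'·∑_{k=1}^{s} [F₃(A, A'+I, B, B'+I; C+(2−k)I; x, y)·(C−kI)⁻¹·(C−(k−1)I)⁻¹]·B'. -/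

import Mathlib

/-- The shifted factorial (Pochhammer) matrix: `(A)_0 = I`, `(A)_{n+1} = (A)_n (A + nI)`. -/
noncomputable def mPoch {r : ℕ} (A : Matrix (Fin r) (Fin r) ℂ) : ℕ → Matrix (Fin r) (Fin r) ℂ
  | 0 => 1
  | n + 1 => mPoch A n * (A + (n : ℂ) • 1)

/-- The third Appell matrix function `F₃(A, A', B, B'; C; x, y)`. -/
noncomputable def appellF3 {r : ℕ} (A A' B B' C : Matrix (Fin r) (Fin r) ℂ) (x y : ℂ) :
    Matrix (Fin r) (Fin r) ℂ :=
  ∑' p : ℕ × ℕ,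
    (((p.1.factorial : ℂ) * (p.2.factorial : ℂ))⁻¹ * x ^ p.1 * y ^ p.2) •
      (mPoch A p.1 * mPoch A' p.2 * mPoch B p.1 * mPoch B' p.2 * (mPoch C (p.1 + p.2))⁻¹)

/-!
Termwise, `(E)_N⁻¹ = (E + I)_N⁻¹ + N (E + I)_N⁻¹ E⁻¹`. Splitting `N = m + n` and lowering `m`
(resp. `n`) by one through `(A)_{m+1} = A (A + I)_m` turns the two extra series into
`x A B F₃(A + I, A', B + I, B'; E + 2I)` and `y A' F₃(A, A' + I, B, B' + I; E + 2I) B'`, each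
multiplied by `E⁻¹ (E + I)⁻¹`. This contiguous relation between `E` and `E + I`, applied to
`E = C - kI` for `k = 1, …, s`, telescopes to the theorem. All series converge absolutely since
`(n + 1)⁻¹ (M + nI) → I`, whence `‖(M)_n‖ ≤ K tⁿ n!` and `‖(C)_n⁻¹‖ ≤ K tⁿ / n!` for every `t > 1`.
-/

theorem Matrix.inv_smul_of_ne_zero {n K : Type*} [Fintype n] [DecidableEq n] [Field K]
    (M : Matrix n n K) {k : K} (hk : k ≠ 0) : (k • M)⁻¹ = k⁻¹ • M⁻¹ := by
  by_cases hM : IsUnit M.det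
  · exact Matrix.inv_smul' M (Units.mk0 k hk) hM
  · have hkM : ¬IsUnit (k • M).det := by
      rwa [Matrix.det_smul, IsUnit.mul_iff, not_and_or, or_iff_right (by simp [hk])]
    rw [Matrix.nonsing_inv_apply_not_isUnit _ hM, Matrix.nonsing_inv_apply_not_isUnit _ hkM,
      smul_zero]

theorem Commute.matrix_inv_right {n α : Type*} [Fintype n] [DecidableEq n] [CommRing α]
    {X M : Matrix n n α} (h : Commute X M) : Commute X M⁻¹ := by
  by_cases hM : IsUnit M.det
  · have := M.invertibleOfIsUnitDet hM
    rw [← Matrix.invOf_eq_nonsing_inv]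
    exact h.invOf_right
  · rw [Matrix.nonsing_inv_apply_not_isUnit M hM]
    exact Commute.zero_right X

theorem Commute.add_smul_one_right {R A : Type*} [CommSemiring R] [Semiring A] [Algebra R A]
    {X M : A} (h : Commute X M) (z : R) : Commute X (M + z • 1) :=
  h.add_right ((Commute.one_right X).smul_right z)

theorem exists_prod_range_le_mul_pow {c : ℕ → ℝ} {t : ℝ} (hc : ∀ i, 0 ≤ c i) (ht : 0 < t)
    (hct : ∀ᶠ i in Filter.atTop, c i ≤ t) :
    ∃ K, ∀ n, ∏ i ∈ Finset.range n, c i ≤ K * t ^ n := by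
  obtain ⟨i₀, hi₀⟩ := Filter.eventually_atTop.mp hct
  have hterm : ∀ n, 0 ≤ (∏ i ∈ Finset.range n, c i) / t ^ n := fun n =>
    div_nonneg (Finset.prod_nonneg fun i _ => hc i) (pow_nonneg ht.le n)
  set K := ∑ n ∈ Finset.range (i₀ + 1), (∏ i ∈ Finset.range n, c i) / t ^ n
  have hK : 0 ≤ K := Finset.sum_nonneg fun n _ => hterm n
  refine ⟨K, fun n => ?_⟩
  induction n with
  | zero => simpa using Finset.single_le_sum (fun n _ => hterm n) (Finset.mem_range.mpr i₀.succ_pos)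
  | succ n ih =>
    rcases Nat.lt_or_ge n i₀ with hn | hn
    · rw [← div_le_iff₀ (pow_pos ht _)]
      exact Finset.single_le_sum (fun n _ => hterm n) (Finset.mem_range.mpr (by omega))
    · rw [Finset.prod_range_succ, pow_succ, ← mul_assoc]
      exact mul_le_mul ih (hi₀ n hn) (hc n) (mul_nonneg hK (pow_nonneg ht.le n))

section AppellF3

variable {r : ℕ}

local notation "Mat" => Matrix (Fin r) (Fin r) ℂ

theorem Commute.mPoch_right {X M : Mat} (h : Commute X M) (n : ℕ) : Commute X (mPoch M n) := by
  induction n with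
  | zero => exact Commute.one_right X
  | succ n ih => exact ih.mul_right (h.add_smul_one_right _)

theorem mPoch_succ_left (A : Mat) (n : ℕ) : mPoch A (n + 1) = A * mPoch (A + 1) n := by
  induction n with
  | zero => simp [mPoch]
  | succ n ih =>
    rw [mPoch, ih, mPoch, mul_assoc]
    congr 2
    push_cast
    module

/-- The Pochhammer form of `1/E - 1/(E + N) = N / (E (E + N))`. -/
theorem inv_mPoch_eq_inv_mPoch_add_one_add (E : Mat) (N : ℕ) (hE : IsUnit E)
    (hEN : IsUnit (E + (N : ℂ) • 1)) :
    (mPoch E N)⁻¹ = (mPoch (E + 1) N)⁻¹ + (N : ℂ) • ((mPoch (E + 1) N)⁻¹ * E⁻¹) := by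
  cases N with
  | zero => simp [mPoch]
  | succ M =>
    have hEM : E + 1 + (M : ℂ) • 1 = E + ((M + 1 : ℕ) : ℂ) • 1 := by push_cast; module
    set F := E + 1
    have hEdet := (Matrix.isUnit_iff_isUnit_det E).mp hE
    have hGdet := (Matrix.isUnit_iff_isUnit_det _).mp (hEM ▸ hEN)
    have hcomm : Commute (F + (M : ℂ) • 1) (mPoch F M)⁻¹ :=
      ((Commute.refl F).add_smul_one_right _).symm.mPoch_right M |>.matrix_inv_right
    have hGE : (F + (M : ℂ) • 1) * E⁻¹ = 1 + ((M + 1 : ℕ) : ℂ) • E⁻¹ := by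
      rw [hEM, add_mul, Matrix.mul_nonsing_inv _ hEdet, smul_mul_assoc, one_mul]
    calc (mPoch E (M + 1))⁻¹ = (mPoch F M)⁻¹ * E⁻¹ := by rw [mPoch_succ_left, Matrix.mul_inv_rev]
      _ = (F + (M : ℂ) • 1)⁻¹ * ((F + (M : ℂ) • 1) * ((mPoch F M)⁻¹ * E⁻¹)) := by
        rw [Matrix.nonsing_inv_mul_cancel_left _ _ hGdet]
      _ = (F + (M : ℂ) • 1)⁻¹ * (mPoch F M)⁻¹ * ((F + (M : ℂ) • 1) * E⁻¹) := by
        rw [← mul_assoc (F + _), hcomm.eq]; simp only [mul_assoc]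
      _ = _ := by
        rw [hGE, mul_add, mul_one, mul_smul_comm, mPoch, Matrix.mul_inv_rev]

noncomputable def appellF3Term (A A' B B' C : Mat) (x y : ℂ) (p : ℕ × ℕ) : Mat :=
  (((p.1.factorial : ℂ) * (p.2.factorial : ℂ))⁻¹ * x ^ p.1 * y ^ p.2) •
    (mPoch A p.1 * mPoch A' p.2 * mPoch B p.1 * mPoch B' p.2 * (mPoch C (p.1 + p.2))⁻¹)

section Shift

variable (A A' B B' : Matrix (Fin r) (Fin r) ℂ) (x y : ℂ)

theorem appellF3Term_eq_add (E : Mat) (hE : ∀ n : ℕ, IsUnit (E + (n : ℂ) • 1)) (p : ℕ × ℕ) :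
    appellF3Term A A' B B' E x y p = appellF3Term A A' B B' (E + 1) x y p +
      ((p.1 : ℂ) + p.2) • (appellF3Term A A' B B' (E + 1) x y p * E⁻¹) := by
  have hE0 : IsUnit E := by simpa using hE 0
  unfold appellF3Term
  rw [inv_mPoch_eq_inv_mPoch_add_one_add E _ hE0 (hE _), mul_add,
    smul_add, mul_smul_comm, smul_comm, smul_mul_assoc, ← mul_assoc, Nat.cast_add]

theorem factorial_coeff_succ_fst (m n : ℕ) :
    ((m + 1 : ℕ) : ℂ) * (((m + 1).factorial * n.factorial : ℂ)⁻¹ * x ^ (m + 1) * y ^ n) =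
      x * ((m.factorial * n.factorial : ℂ)⁻¹ * x ^ m * y ^ n) := by
  rw [Nat.factorial_succ]
  push_cast
  field_simp
  ring

theorem succ_smul_appellF3Term_succ_fst (D : Mat) (hBA : Commute B A) (hBA' : Commute B A')
    (m n : ℕ) :
    ((m + 1 : ℕ) : ℂ) • appellF3Term A A' B B' D x y (m + 1, n) =
      x • (A * B * (appellF3Term (A + 1) A' (B + 1) B' (D + 1) x y (m, n) * D⁻¹)) := by
  have hB : Commute B (mPoch (A + 1) m * mPoch A' n) :=
    ((hBA.add_right (Commute.one_right B)).mPoch_right m).mul_right (hBA'.mPoch_right n)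
  dsimp only [appellF3Term]
  rw [smul_smul, factorial_coeff_succ_fst, smul_mul_assoc, mul_smul_comm, smul_smul]
  congr 1
  rw [show m + 1 + n = m + n + 1 by omega, mPoch_succ_left A, mPoch_succ_left B,
    mPoch_succ_left D, Matrix.mul_inv_rev]
  simp only [← mul_assoc]
  rw [mul_assoc A (mPoch (A + 1) m), mul_assoc A _ B, ← hB.eq]
  simp only [← mul_assoc]

theorem factorial_coeff_succ_snd (m n : ℕ) :
    ((n + 1 : ℕ) : ℂ) * ((m.factorial * (n + 1).factorial : ℂ)⁻¹ * x ^ m * y ^ (n + 1)) =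
      y * ((m.factorial * n.factorial : ℂ)⁻¹ * x ^ m * y ^ n) := by
  rw [Nat.factorial_succ]
  push_cast
  field_simp
  ring

theorem succ_smul_appellF3Term_succ_snd (D : Mat) (hA'A : Commute A' A) (hB'D : Commute B' D)
    (m n : ℕ) :
    ((n + 1 : ℕ) : ℂ) • appellF3Term A A' B B' D x y (m, n + 1) =
      y • (A' * (appellF3Term A (A' + 1) B (B' + 1) (D + 1) x y (m, n) * D⁻¹) * B') := by
  have hB' : Commute B' (mPoch (B' + 1) n * ((mPoch (D + 1) (m + n))⁻¹ * D⁻¹)) :=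
    (((Commute.refl B').add_right (Commute.one_right B')).mPoch_right n).mul_right
      ((((hB'D.add_right (Commute.one_right B')).mPoch_right _).matrix_inv_right).mul_right
        hB'D.matrix_inv_right)
  dsimp only [appellF3Term]
  rw [smul_smul, factorial_coeff_succ_snd, smul_mul_assoc, mul_smul_comm, smul_mul_assoc,
    smul_smul]
  congr 1
  rw [show m + (n + 1) = m + n + 1 by omega, mPoch_succ_left A', mPoch_succ_left B',
    mPoch_succ_left D, Matrix.mul_inv_rev]
  simp only [mul_assoc]
  rw [← (hA'A.mPoch_right m).left_comm, hB'.eq]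
  simp only [mul_assoc]

end Shift

section Summability

open Filter Topology

attribute [local instance] Matrix.linftyOpNormedAddCommGroup Matrix.linftyOpNormedRing
  Matrix.linftyOpNormedAlgebra

theorem Matrix.linfty_opNorm_one_le {n α : Type*} [Fintype n] [DecidableEq n] [NormedRing α]
    [NormOneClass α] : ‖(1 : Matrix n n α)‖ ≤ 1 := by
  rw [← Matrix.diagonal_one, Matrix.linfty_opNorm_diagonal]
  exact pi_norm_le_iff_of_nonneg zero_le_one |>.mpr fun _ => norm_one.le

theorem tendsto_inv_succ_smul_add_smul_one (M : Mat) :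
    Tendsto (fun i : ℕ => ((i : ℂ) + 1)⁻¹ • (M + (i : ℂ) • 1)) atTop (𝓝 1) := by
  have h : ∀ i : ℕ, ((i : ℂ) + 1)⁻¹ • (M + (i : ℂ) • 1) = ((i : ℂ) + 1)⁻¹ • (M - 1) + 1 := by
    intro i
    have hi : (i : ℂ) + 1 ≠ 0 := by exact_mod_cast i.succ_ne_zero
    rw [show M + (i : ℂ) • 1 = (M - 1) + ((i : ℂ) + 1) • 1 by module, smul_add, smul_smul,
      inv_mul_cancel₀ hi, one_smul]
  have hinv : Tendsto (fun i : ℕ => ((i : ℂ) + 1)⁻¹) atTop (𝓝 0) := by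
    simpa using (tendsto_add_atTop_iff_nat 1).mpr (tendsto_inv_atTop_nhds_zero_nat (𝕜 := ℂ))
  simpa [h] using (hinv.smul_const (M - 1)).add_const 1

theorem tendsto_succ_smul_inv_add_smul_one (M : Mat) :
    Tendsto (fun i : ℕ => ((i : ℂ) + 1) • (M + (i : ℂ) • 1)⁻¹) atTop (𝓝 1) := by
  have h : ∀ i : ℕ, ((i : ℂ) + 1) • (M + (i : ℂ) • 1)⁻¹ =
      Ring.inverse (((i : ℂ) + 1)⁻¹ • (M + (i : ℂ) • 1)) := by
    intro i
    have hi : ((i : ℂ) + 1)⁻¹ ≠ 0 := inv_ne_zero (by exact_mod_cast i.succ_ne_zero)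
    rw [← Matrix.nonsing_inv_eq_ringInverse, Matrix.inv_smul_of_ne_zero _ hi, inv_inv]
  have hcont := (NormedRing.inverse_continuousAt (1 : Matˣ)).tendsto
  rw [Units.val_one, Ring.inverse_one] at hcont
  simp only [h]
  exact hcont.comp (tendsto_inv_succ_smul_add_smul_one M)

theorem norm_mPoch_le (A : Mat) (n : ℕ) :
    ‖mPoch A n‖ ≤ n.factorial * ∏ i ∈ Finset.range n, ‖((i : ℂ) + 1)⁻¹ • (A + (i : ℂ) • 1)‖ := by
  induction n with
  | zero => simpa [mPoch] using Matrix.linfty_opNorm_one_le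
  | succ n ih =>
    have hn : ‖(n : ℂ) + 1‖ = (n : ℝ) + 1 := by exact_mod_cast Complex.norm_natCast (n + 1)
    calc ‖mPoch A (n + 1)‖ ≤ ‖mPoch A n‖ * ‖A + (n : ℂ) • 1‖ := norm_mul_le _ _
      _ = ‖mPoch A n‖ * (((n : ℝ) + 1) * ‖((n : ℂ) + 1)⁻¹ • (A + (n : ℂ) • 1)‖) := by
        rw [norm_smul, norm_inv, hn, mul_inv_cancel_left₀ (by positivity)]
      _ ≤ n.factorial * (∏ i ∈ Finset.range n, ‖((i : ℂ) + 1)⁻¹ • (A + (i : ℂ) • 1)‖) *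
          (((n : ℝ) + 1) * ‖((n : ℂ) + 1)⁻¹ • (A + (n : ℂ) • 1)‖) := by gcongr
      _ = _ := by rw [Finset.prod_range_succ, Nat.factorial_succ]; push_cast; ring

theorem norm_inv_mPoch_le (C : Mat) (n : ℕ) :
    ‖(mPoch C n)⁻¹‖ ≤
      (n.factorial : ℝ)⁻¹ * ∏ i ∈ Finset.range n, ‖((i : ℂ) + 1) • (C + (i : ℂ) • 1)⁻¹‖ := by
  induction n with
  | zero => simpa [mPoch] using Matrix.linfty_opNorm_one_le
  | succ n ih =>
    have hn : ‖(n : ℂ) + 1‖ = (n : ℝ) + 1 := by exact_mod_cast Complex.norm_natCast (n + 1)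
    calc ‖(mPoch C (n + 1))⁻¹‖ ≤ ‖(C + (n : ℂ) • 1)⁻¹‖ * ‖(mPoch C n)⁻¹‖ := by
          rw [mPoch, Matrix.mul_inv_rev]; exact norm_mul_le _ _
      _ = ((n : ℝ) + 1)⁻¹ * ‖((n : ℂ) + 1) • (C + (n : ℂ) • 1)⁻¹‖ * ‖(mPoch C n)⁻¹‖ := by
        rw [norm_smul, hn, ← mul_assoc, inv_mul_cancel₀ (by positivity), one_mul]
      _ ≤ ((n : ℝ) + 1)⁻¹ * ‖((n : ℂ) + 1) • (C + (n : ℂ) • 1)⁻¹‖ * ((n.factorial : ℝ)⁻¹ *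
          ∏ i ∈ Finset.range n, ‖((i : ℂ) + 1) • (C + (i : ℂ) • 1)⁻¹‖) := by gcongr
      _ = _ := by
        rw [Finset.prod_range_succ, Nat.factorial_succ, Nat.cast_mul, mul_inv]; push_cast; ring

theorem exists_norm_mPoch_le (A : Mat) {t : ℝ} (ht : 1 < t) :
    ∃ K, ∀ n, ‖mPoch A n‖ ≤ K * t ^ n * n.factorial := by
  obtain ⟨K, h⟩ := exists_prod_range_le_mul_pow (fun _ => norm_nonneg _) (by linarith)
    (((tendsto_inv_succ_smul_add_smul_one A).norm.eventually
      (gt_mem_nhds (Matrix.linfty_opNorm_one_le.trans_lt ht))).mono fun _ hi => hi.le)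
  refine ⟨K, fun n => (norm_mPoch_le A n).trans ?_⟩
  rw [mul_comm]
  gcongr
  exact h n

theorem exists_norm_inv_mPoch_le (C : Mat) {t : ℝ} (ht : 1 < t) :
    ∃ K, ∀ n, ‖(mPoch C n)⁻¹‖ ≤ K * t ^ n / n.factorial := by
  obtain ⟨K, h⟩ := exists_prod_range_le_mul_pow (fun _ => norm_nonneg _) (by linarith)
    (((tendsto_succ_smul_inv_add_smul_one C).norm.eventually
      (gt_mem_nhds (Matrix.linfty_opNorm_one_le.trans_lt ht))).mono fun _ hi => hi.le)
  refine ⟨K, fun n => (norm_inv_mPoch_le C n).trans ?_⟩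
  rw [div_eq_inv_mul]
  gcongr
  exact h n

theorem summable_appellF3Term (A A' B B' C : Mat) {x y : ℂ} (hx : ‖x‖ < 1) (hy : ‖y‖ < 1) :
    Summable (appellF3Term A A' B B' C x y) := by
  obtain ⟨t, ⟨htx, hty⟩, ht⟩ : ∃ t : ℝ, (t ^ 3 * ‖x‖ < 1 ∧ t ^ 3 * ‖y‖ < 1) ∧ 1 < t := by
    have hcont : ∀ z : ℂ, ‖z‖ < 1 → ∀ᶠ t : ℝ in 𝓝 1, t ^ 3 * ‖z‖ < 1 := fun z hz =>
      (by fun_prop : Continuous fun t : ℝ => t ^ 3 * ‖z‖).continuousAt.eventually_lt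
        continuousAt_const (by simpa using hz)
    exact (((hcont x hx).and (hcont y hy)).filter_mono nhdsWithin_le_nhds |>.and
      (self_mem_nhdsWithin (s := Set.Ioi (1 : ℝ)))).exists
  obtain ⟨K₁, h₁⟩ := exists_norm_mPoch_le A ht
  obtain ⟨K₂, h₂⟩ := exists_norm_mPoch_le A' ht
  obtain ⟨K₃, h₃⟩ := exists_norm_mPoch_le B ht
  obtain ⟨K₄, h₄⟩ := exists_norm_mPoch_le B' ht
  obtain ⟨K₅, h₅⟩ := exists_norm_inv_mPoch_le C ht
  have hg : Summable fun p : ℕ × ℕ =>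
      K₁ * K₂ * K₃ * K₄ * K₅ * ((t ^ 3 * ‖x‖) ^ p.1 * (t ^ 3 * ‖y‖) ^ p.2) :=
    ((summable_geometric_of_lt_one (by positivity) htx).mul_of_nonneg
      (summable_geometric_of_lt_one (by positivity) hty) (fun _ => by positivity)
      (fun _ => by positivity)).mul_left _
  refine Summable.of_norm_bounded hg fun ⟨m, n⟩ => ?_
  have hfact : (m.factorial : ℝ) * n.factorial ≤ (m + n).factorial := by
    exact_mod_cast Nat.le_of_dvd (Nat.factorial_pos _)
      (Nat.factorial_mul_factorial_dvd_factorial_add m n)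
  have hK₅ : 0 ≤ K₅ := by simpa using (norm_nonneg _).trans (h₅ 0)
  have hQ : ‖(mPoch C (m + n))⁻¹‖ ≤ K₅ * t ^ (m + n) / (m.factorial * n.factorial) :=
    (h₅ _).trans (by gcongr)
  calc ‖appellF3Term A A' B B' C x y (m, n)‖
      ≤ ‖((m.factorial * n.factorial : ℂ))⁻¹ * x ^ m * y ^ n‖ *
          (K₁ * t ^ m * m.factorial * (K₂ * t ^ n * n.factorial) * (K₃ * t ^ m * m.factorial) *
            (K₄ * t ^ n * n.factorial) * (K₅ * t ^ (m + n) / (m.factorial * n.factorial))) := by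
        rw [appellF3Term, norm_smul]
        gcongr
        exact norm_mul_le_of_le (norm_mul_le_of_le (norm_mul_le_of_le
          (norm_mul_le_of_le (h₁ m) (h₂ n)) (h₃ m)) (h₄ n)) hQ
    _ = _ := by
      simp only [norm_mul, norm_inv, norm_pow, Complex.norm_natCast]
      field_simp
      ring

end Summability

section Contiguous

variable (A A' B B' : Matrix (Fin r) (Fin r) ℂ) {x y : ℂ}

theorem hasSum_appellF3 (C : Mat) (hx : ‖x‖ < 1) (hy : ‖y‖ < 1) :
    HasSum (appellF3Term A A' B B' C x y) (appellF3 A A' B B' C x y) :=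
  (summable_appellF3Term A A' B B' C hx hy).hasSum

theorem hasSum_fst_smul_appellF3Term (D : Mat) (hBA : Commute B A) (hBA' : Commute B A')
    (hx : ‖x‖ < 1) (hy : ‖y‖ < 1) :
    HasSum (fun p : ℕ × ℕ => (p.1 : ℂ) • appellF3Term A A' B B' D x y p)
      (x • (A * B * (appellF3 (A + 1) A' (B + 1) B' (D + 1) x y * D⁻¹))) := by
  have hg : Function.Injective fun p : ℕ × ℕ => (p.1 + 1, p.2) := fun _ _ h =>
    Prod.ext (by simpa using congrArg Prod.fst h) (by simpa using congrArg Prod.snd h)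
  refine (hg.hasSum_iff fun p hp => ?_).mp ?_
  · obtain ⟨_ | m, n⟩ := p
    · simp
    · exact absurd ⟨(m, n), rfl⟩ hp
  · exact ((((hasSum_appellF3 _ _ _ _ _ hx hy).mul_right D⁻¹).mul_left (A * B)).const_smul
      x).congr_fun fun p => succ_smul_appellF3Term_succ_fst A A' B B' x y D hBA hBA' p.1 p.2

theorem hasSum_snd_smul_appellF3Term (D : Mat) (hA'A : Commute A' A) (hB'D : Commute B' D)
    (hx : ‖x‖ < 1) (hy : ‖y‖ < 1) :
    HasSum (fun p : ℕ × ℕ => (p.2 : ℂ) • appellF3Term A A' B B' D x y p)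
      (y • (A' * (appellF3 A (A' + 1) B (B' + 1) (D + 1) x y * D⁻¹) * B')) := by
  have hg : Function.Injective fun p : ℕ × ℕ => (p.1, p.2 + 1) := fun _ _ h =>
    Prod.ext (by simpa using congrArg Prod.fst h) (by simpa using congrArg Prod.snd h)
  refine (hg.hasSum_iff fun p hp => ?_).mp ?_
  · obtain ⟨m, _ | n⟩ := p
    · simp
    · exact absurd ⟨(m, n), rfl⟩ hp
  · exact (((((hasSum_appellF3 _ _ _ _ _ hx hy).mul_right D⁻¹).mul_left A').mul_right
      B').const_smul y).congr_fun fun p =>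
        succ_smul_appellF3Term_succ_snd A A' B B' x y D hA'A hB'D p.1 p.2

theorem appellF3_eq_appellF3_add_one_add (E : Mat) (hBA : Commute B A) (hBA' : Commute B A')
    (hA'A : Commute A' A) (hB'E : Commute B' E) (hE : ∀ n : ℕ, IsUnit (E + (n : ℂ) • 1))
    (hx : ‖x‖ < 1) (hy : ‖y‖ < 1) :
    appellF3 A A' B B' E x y = appellF3 A A' B B' (E + 1) x y +
      x • (A * B * (appellF3 (A + 1) A' (B + 1) B' (E + 1 + 1) x y * E⁻¹ * (E + 1)⁻¹)) +
      y • (A' * (appellF3 A (A' + 1) B (B' + 1) (E + 1 + 1) x y * E⁻¹ * (E + 1)⁻¹) * B') := by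
  have hsum := (hasSum_appellF3 A A' B B' (E + 1) hx hy).add
    (((hasSum_fst_smul_appellF3Term A A' B B' (E + 1) hBA hBA' hx hy).add
      (hasSum_snd_smul_appellF3Term A A' B B' (E + 1) hA'A
        (hB'E.add_right (Commute.one_right B')) hx hy)).mul_right E⁻¹)
  have hterm : (fun p : ℕ × ℕ => appellF3Term A A' B B' (E + 1) x y p +
      ((p.1 : ℂ) • appellF3Term A A' B B' (E + 1) x y p +
        (p.2 : ℂ) • appellF3Term A A' B B' (E + 1) x y p) * E⁻¹) = appellF3Term A A' B B' E x y :=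
    funext fun p => by rw [appellF3Term_eq_add A A' B B' x y E hE p, ← add_smul, smul_mul_assoc]
  rw [hterm] at hsum
  have hcomm : Commute (E + 1)⁻¹ E⁻¹ :=
    ((Commute.refl E).add_left (Commute.one_left E)).matrix_inv_right.symm.matrix_inv_right.symm
  rw [(hasSum_appellF3 A A' B B' E hx hy).unique hsum]
  simp only [add_mul, smul_mul_assoc, mul_assoc, hcomm.eq, hcomm.left_comm,
    hB'E.matrix_inv_right.eq, add_assoc]

end Contiguous

end AppellF3

theorem isUnit_sub_smul_one_add_smul_one {r : ℕ} {C : Matrix (Fin r) (Fin r) ℂ} {s k : ℕ}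
    (hC : ∀ n : ℕ, IsUnit (C + (n : ℂ) • 1))
    (hCs : ∀ k : ℕ, 1 ≤ k → k ≤ s → IsUnit (C - (k : ℂ) • 1)) (hk : k ≤ s) (n : ℕ) :
    IsUnit (C - (k : ℂ) • 1 + (n : ℂ) • 1) := by
  rcases le_or_gt k n with hkn | hnk
  · rw [show C - (k : ℂ) • 1 + (n : ℂ) • 1 = C + ((n - k : ℕ) : ℂ) • 1 by
      rw [Nat.cast_sub hkn]; module]
    exact hC _
  · rw [show C - (k : ℂ) • 1 + (n : ℂ) • 1 = C - ((k - n : ℕ) : ℂ) • 1 by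
      rw [Nat.cast_sub hnk.le]; module]
    exact hCs _ (by omega) (by omega)

theorem appellF3_recursion_C {r : ℕ} (A A' B B' C : Matrix (Fin r) (Fin r) ℂ) (x y : ℂ) (s : ℕ)
    (hAA' : A * A' = A' * A) (hAB : A * B = B * A) (hA'B : A' * B = B * A')
    (hB'C : B' * C = C * B')
    (hC : ∀ n : ℕ, IsUnit (C + (n : ℂ) • (1 : Matrix (Fin r) (Fin r) ℂ)))
    (hCs : ∀ k : ℕ, 1 ≤ k → k ≤ s → IsUnit (C - (k : ℂ) • (1 : Matrix (Fin r) (Fin r) ℂ)))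
    (hx : ‖x‖ < 1) (hy : ‖y‖ < 1) :
    appellF3 A A' B B' (C - (s : ℂ) • 1) x y =
      appellF3 A A' B B' C x y +
        x • (A * B * ∑ k ∈ Finset.Icc 1 s,
          appellF3 (A + 1) A' (B + 1) B' (C + ((2 : ℂ) - (k : ℂ)) • 1) x y *
            (C - (k : ℂ) • 1)⁻¹ * (C - ((k : ℂ) - 1) • 1)⁻¹) +
        y • (A' * (∑ k ∈ Finset.Icc 1 s,
          appellF3 A (A' + 1) B (B' + 1) (C + ((2 : ℂ) - (k : ℂ)) • 1) x y *
            (C - (k : ℂ) • 1)⁻¹ * (C - ((k : ℂ) - 1) • 1)⁻¹) * B') := by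
  induction s with
  | zero => simp
  | succ s ih =>
    have hE1 : C - ((s + 1 : ℕ) : ℂ) • 1 + 1 = C - (s : ℂ) • 1 := by push_cast; module
    have hE2 : C - (s : ℂ) • 1 + 1 = C + ((2 : ℂ) - ((s + 1 : ℕ) : ℂ)) • 1 := by push_cast; module
    have hk : C - (((s + 1 : ℕ) : ℂ) - 1) • 1 = C - (s : ℂ) • 1 := by push_cast; module
    have hB'E : Commute B' (C - ((s + 1 : ℕ) : ℂ) • 1) :=
      Commute.sub_right hB'C ((Commute.one_right B').smul_right _)
    rw [appellF3_eq_appellF3_add_one_add A A' B B' _ hAB.symm hA'B.symm hAA'.symm hB'E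
      (isUnit_sub_smul_one_add_smul_one hC hCs le_rfl) hx hy, hE1, hE2,
      ih fun k hk₁ hk₂ => hCs k hk₁ (hk₂.trans s.le_succ), Finset.sum_Icc_succ_top (by omega),
      Finset.sum_Icc_succ_top (by omega), hk]
    simp only [mul_add, add_mul, smul_add]
    abel
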